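/- For every word v ∈ S^{≤p}_free and every word u over A, L(vu) = L(L(v)u). -/
import Mathlib


open scoped Classical

/-- `w` contains a factor that is a square of period between `lo` and `hi`. -/
def HasSq {A : Type*} (lo hi : ℕ) (w : List A) : Prop :=
  ∃ u : List A, lo ≤ u.length ∧ u.length ≤ hi ∧ (u ++ u) <:+: w

/-- `w` is a square of period between `lo` and `hi`. -/
def IsSq {A : Type*} (lo hi : ℕ) (w : List A) : Prop :=
  ∃ u : List A, lo ≤ u.length ∧ u.length ≤ hi ∧ w = u ++ u

/-- `w` is a minimal square of period between `lo` and `hi`: it is such a square and no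
proper factor of it is such a square. -/
def MinSq {A : Type*} (lo hi : ℕ) (w : List A) : Prop :=
  IsSq lo hi w ∧ ∀ f : List A, f <:+: w → f ≠ w → ¬ IsSq lo hi f

/-- `s` is a proper prefix of some minimal square of period between `2` and `p`. -/
def PrefMinSq {A : Type*} (p : ℕ) (s : List A) : Prop :=
  ∃ m : List A, MinSq 2 p m ∧ s <+: m ∧ s ≠ m

/-- `L(v)`: the longest suffix of `v` that is a proper prefix of some minimal square of
period between `2` and `p`. -/
noncomputable def LOf {A : Type*} (p : ℕ) (v : List A) : List A :=
  if h : ∃ s : List A, (s <:+ v ∧ PrefMinSq p s) ∧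
      ∀ s' : List A, (s' <:+ v ∧ PrefMinSq p s') → s'.length ≤ s.length
  then h.choose else []

/-- Suffixes of a common word are comparable by length. -/
lemma suffix_of_suffix_of_length_le {A : Type*} {s t w : List A}
    (hs : s <:+ w) (ht : t <:+ w) (h : s.length ≤ t.length) : s <:+ t := by
  have hsw : s.length ≤ w.length := hs.length_le
  have htw : t.length ≤ w.length := ht.length_le
  rw [List.suffix_iff_eq_drop] at hs ht
  have : s = t.drop (t.length - s.length) := by
    rw [hs, ht, List.drop_drop]
    congr 1
    simp only [List.length_drop]
    omega
  rw [this]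
  exact List.drop_suffix _ _

/-- `PrefMinSq` is closed under prefixes. -/
lemma PrefMinSq.of_prefix {A : Type*} {p : ℕ} {s t : List A}
    (h : PrefMinSq p t) (hp : s <+: t) : PrefMinSq p s := by
  obtain ⟨m, hm, htm, hne⟩ := h
  refine ⟨m, hm, hp.trans htm, ?_⟩
  intro rfl'
  subst rfl'
  have h1 : t.length < s.length := by
    rcases lt_or_eq_of_le htm.length_le with h | h
    · exact h
    · exact absurd (htm.eq_of_length h) hne
  exact absurd hp.length_le (by omega)

/-- If some suffix of `w` is a `PrefMinSq`, there is a longest one. -/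
lemma exists_max_suffix {A : Type*} {p : ℕ} {w : List A}
    (h : ∃ s : List A, s <:+ w ∧ PrefMinSq p s) :
    ∃ s : List A, (s <:+ w ∧ PrefMinSq p s) ∧
      ∀ s' : List A, (s' <:+ w ∧ PrefMinSq p s') → s'.length ≤ s.length := by
  classical
  obtain ⟨s0, hs0⟩ := h
  set Q : ℕ → Prop := fun n => ∃ s : List A, s.length = n ∧ s <:+ w ∧ PrefMinSq p s with hQ
  have hs0b : s0.length ≤ w.length := hs0.1.length_le
  have hQ0 : Q s0.length := ⟨s0, rfl, hs0⟩
  obtain ⟨s, hslen, hs⟩ := Nat.findGreatest_spec hs0b hQ0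
  refine ⟨s, hs, ?_⟩
  intro s' hs'
  have h2 : s'.length ≤ Nat.findGreatest Q w.length :=
    Nat.le_findGreatest (P := Q) hs'.1.length_le ⟨s', rfl, hs'⟩
  rw [hslen]; exact h2

lemma LOf_eq {A : Type*} {p : ℕ} {w s : List A}
    (hs : s <:+ w ∧ PrefMinSq p s)
    (hmax : ∀ s' : List A, (s' <:+ w ∧ PrefMinSq p s') → s'.length ≤ s.length) :
    LOf p w = s := by
  have hex : ∃ t : List A, (t <:+ w ∧ PrefMinSq p t) ∧
      ∀ s' : List A, (s' <:+ w ∧ PrefMinSq p s') → s'.length ≤ t.length := ⟨s, hs, hmax⟩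
  rw [LOf, dif_pos hex]
  obtain ⟨ht, htmax⟩ := hex.choose_spec
  have hlen : (hex.choose).length = s.length :=
    le_antisymm (hmax _ ht) (htmax _ hs)
  exact (suffix_of_suffix_of_length_le ht.1 hs.1 hlen.le).eq_of_length hlen

lemma LOf_eq_nil {A : Type*} {p : ℕ} {w : List A}
    (h : ¬ ∃ s : List A, s <:+ w ∧ PrefMinSq p s) : LOf p w = [] := by
  rw [LOf, dif_neg]
  rintro ⟨s, hs, -⟩
  exact h ⟨s, hs⟩

lemma LOf_suffix {A : Type*} (p : ℕ) (w : List A) : LOf p w <:+ w := by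
  by_cases h : ∃ s : List A, s <:+ w ∧ PrefMinSq p s
  · obtain ⟨s, hs, hmax⟩ := exists_max_suffix h
    rw [LOf_eq hs hmax]; exact hs.1
  · rw [LOf_eq_nil h]; exact List.nil_suffix

lemma LOf_max {A : Type*} (p : ℕ) (w : List A) {s : List A}
    (hs : s <:+ w) (hps : PrefMinSq p s) : s.length ≤ (LOf p w).length := by
  have h : ∃ t : List A, t <:+ w ∧ PrefMinSq p t := ⟨s, hs, hps⟩
  obtain ⟨t, ht, hmax⟩ := exists_max_suffix h
  rw [LOf_eq ht hmax]
  exact hmax s ⟨hs, hps⟩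

/-- For every word `v` containing no square of period between `2` and `p` and every word
`u`, we have `L(v ++ u) = L(L(v) ++ u)`. -/
theorem stmt_17 (A : Type*) [Fintype A] (p : ℕ) (hp : 2 ≤ p)
    (v u : List A) (hv : ¬ HasSq 2 p v) :
    LOf p (v ++ u) = LOf p (LOf p v ++ u) := by
  set l := LOf p v with hl
  have hlv : l <:+ v := LOf_suffix p v
  have hlu : l ++ u <:+ v ++ u := by
    obtain ⟨r, hr⟩ := hlv
    exact ⟨r, by rw [← List.append_assoc, hr]⟩
  -- key equivalence of the predicates
  have key : ∀ s : List A, (s <:+ v ++ u ∧ PrefMinSq p s) ↔ (s <:+ l ++ u ∧ PrefMinSq p s) := by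
    intro s
    constructor
    · rintro ⟨hsuf, hpre⟩
      refine ⟨?_, hpre⟩
      by_cases hlen : s.length ≤ u.length
      · exact (suffix_of_suffix_of_length_le hsuf (List.suffix_append v u) hlen).trans
          (List.suffix_append l u)
      · push_neg at hlen
        have hus : u <:+ s :=
          suffix_of_suffix_of_length_le (List.suffix_append v u) hsuf hlen.le
        obtain ⟨t, rfl⟩ := hus
        obtain ⟨r, hr⟩ := hsuf
        have htv : t <:+ v := by
          refine ⟨r, ?_⟩
          have := hr
          rw [← List.append_assoc] at this
          exact List.append_cancel_right this
        have htp : PrefMinSq p t := hpre.of_prefix (List.prefix_append t u)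
        have htl : t <:+ l := suffix_of_suffix_of_length_le htv hlv (LOf_max p v htv htp)
        obtain ⟨r', hr'⟩ := htl
        exact ⟨r', by rw [← List.append_assoc, hr']⟩
    · rintro ⟨hsuf, hpre⟩
      exact ⟨hsuf.trans hlu, hpre⟩
  by_cases hex : ∃ s : List A, s <:+ v ++ u ∧ PrefMinSq p s
  · obtain ⟨s, hs, hmax⟩ := exists_max_suffix hex
    rw [LOf_eq hs hmax, LOf_eq ((key s).1 hs) (fun s' hs' => hmax s' ((key s').2 hs'))]
  · rw [LOf_eq_nil hex, LOf_eq_nil (fun ⟨s, hs⟩ => hex ⟨s, (key s).2 hs⟩)]
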